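/- In the periodic SSEP with N and L even, N < L, the minimal number of moves from the configuration A = {1,2,...,N} to the configuration A_L = {L/2+1, ..., L/2+N} is at least N(L−N)/2. More precisely, any move sequence from A to A_L requires at least NL/2 − 2k(N−k) moves for some integer k ∈ [1,N], and since k(N−k) ≤ N²/4, this is at least N(L−N)/2. -/

import Mathlib

/-!
Let `Φ(s) = ∑_{z ∈ s} d(z, c)`, where `d` is the distance on the cycle `ℤ/Lℤ` and `c = L/2 + N/2`
is a central site of the target block. A move changes `Φ` by at most one. Writing `N = 2k` and
`L = 2m`, `Φ` equals `k²` on the target block and, the initial block lying antipodally to `c`,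
`2km − k²` on `{1, …, N}`. Hence every path needs at least `2km − 2k² = N(L − N)/2` moves, which is
`NL/2 − 2k(N − k)` for `k = N/2`.
-/

namespace Paper

/-- There is a path of exactly `n` moves of `step` from `x` to `y`. -/
def Reaches {C : Type*} (step : C → C → Prop) (x y : C) (n : ℕ) : Prop :=
  ∃ f : ℕ → C, f 0 = x ∧ f n = y ∧ ∀ i < n, step (f i) (f (i + 1))

/-- Graph distance: minimal number of moves from `x` to `y`. -/
noncomputable def gdist {C : Type*} (step : C → C → Prop) (x y : C) : ℕ :=
  sInf {n | Reaches step x y n}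

/-- A periodic SSEP move on `N`-subsets of `ℤ/Lℤ`: one particle hops to an
adjacent empty site (mod `L`). -/
def StepPer (L N : ℕ) (x y : Finset (ZMod L)) : Prop :=
  x.card = N ∧ ∃ p ∈ x, ∃ q : ZMod L, (q = p + 1 ∨ q = p - 1) ∧ q ∉ x ∧
    y = insert q (x.erase p)

open Finset

theorem Reaches.abs_sub_le {C : Type*} {step : C → C → Prop} (Φ : C → ℤ)
    (hΦ : ∀ a b, step a b → |Φ b - Φ a| ≤ 1) {x y : C} {n : ℕ}
    (h : Reaches step x y n) : |Φ y - Φ x| ≤ n := by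
  obtain ⟨f, rfl, rfl, hf⟩ := h
  suffices ∀ j ≤ n, |Φ (f j) - Φ (f 0)| ≤ j from this n le_rfl
  intro j hj
  induction j with
  | zero => simp
  | succ j ih =>
    calc |Φ (f (j + 1)) - Φ (f 0)|
        ≤ |Φ (f (j + 1)) - Φ (f j)| + |Φ (f j) - Φ (f 0)| := _root_.abs_sub_le _ _ _
      _ ≤ 1 + j := add_le_add (hΦ _ _ (hf j hj)) (ih (by omega))
      _ = (j + 1 : ℕ) := by push_cast; ring

theorem natAbs_valMinAbs_one_le (n : ℕ) : (1 : ZMod n).valMinAbs.natAbs ≤ 1 := by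
  rcases n with _ | _ | n
  · rfl
  · simp [Subsingleton.elim (1 : ZMod 1) 0]
  · rw [← Nat.cast_one (R := ZMod (n + 2)), ZMod.valMinAbs_natCast_of_le_half (by omega)]
    rfl

theorem natAbs_valMinAbs_add_le_add {n : ℕ} (a b : ZMod n) :
    (a + b).valMinAbs.natAbs ≤ a.valMinAbs.natAbs + b.valMinAbs.natAbs :=
  (ZMod.natAbs_valMinAbs_add_le a b).trans (Int.natAbs_add_le _ _)

theorem abs_sub_abs_valMinAbs_add_one_le {n : ℕ} (a : ZMod n) :
    |(|(a + 1).valMinAbs| - |a.valMinAbs|)| ≤ 1 := by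
  have hup := natAbs_valMinAbs_add_le_add a 1
  have hdown := natAbs_valMinAbs_add_le_add (a + 1) (-1)
  rw [add_neg_cancel_right, ZMod.natAbs_valMinAbs_neg] at hdown
  have hone := natAbs_valMinAbs_one_le n
  rw [abs_sub_le_iff, Int.abs_eq_natAbs, Int.abs_eq_natAbs]
  omega

theorem abs_valMinAbs_intCast {L : ℕ} [NeZero L] {y : ℤ} (hy : 2 * |y| < L) :
    |(y : ZMod L).valMinAbs| = |y| := by
  rw [(ZMod.valMinAbs_spec _ y).2 ⟨rfl, by constructor <;> linarith [le_abs_self y, neg_abs_le y]⟩]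

theorem abs_valMinAbs_intCast_add_half {m : ℕ} [NeZero m] {y : ℤ} (hy : |y| ≤ m) :
    |((y + m : ℤ) : ZMod (2 * m)).valMinAbs| = m - |y| := by
  have hm : (0 : ℤ) < m := by have := NeZero.pos m; omega
  rw [abs_le] at hy
  rcases le_or_gt y 0 with hy0 | hy0
  · rw [(ZMod.valMinAbs_spec _ _).2 ⟨rfl, by constructor <;> push_cast <;> linarith⟩,
      abs_of_nonneg (by linarith), abs_of_nonpos hy0]
    ring
  · have hcast : ((y + m : ℤ) : ZMod (2 * m)) = ((y - m : ℤ) : ZMod (2 * m)) := by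
      have := ZMod.natCast_self (2 * m)
      push_cast at this ⊢
      linear_combination this
    rw [hcast, (ZMod.valMinAbs_spec _ _).2 ⟨rfl, by constructor <;> push_cast <;> linarith⟩,
      abs_of_nonpos (by linarith), abs_of_pos hy0]
    ring

def tentPotential {L : ℕ} (c : ZMod L) (s : Finset (ZMod L)) : ℤ :=
  ∑ z ∈ s, |(z - c).valMinAbs|

theorem abs_tentPotential_sub_le_one {L N : ℕ} (c : ZMod L) {x y : Finset (ZMod L)}
    (h : StepPer L N x y) : |tentPotential c y - tentPotential c x| ≤ 1 := by
  obtain ⟨-, p, hp, q, hq, hqx, rfl⟩ := h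
  have hq' : q ∉ x.erase p := fun h => hqx (mem_of_mem_erase h)
  have hdiff : tentPotential c (insert q (x.erase p)) - tentPotential c x =
      |(q - c).valMinAbs| - |(p - c).valMinAbs| := by
    rw [tentPotential, tentPotential, sum_insert hq', sum_erase_eq_sub hp]
    ring
  rw [hdiff]
  rcases hq with rfl | rfl
  · rw [show p + 1 - c = p - c + 1 by ring]
    exact abs_sub_abs_valMinAbs_add_one_le _
  · rw [abs_sub_comm, show p - c = p - 1 - c + 1 by ring]
    exact abs_sub_abs_valMinAbs_add_one_le _

theorem injOn_natCast_add_range {L N : ℕ} (hN : N ≤ L) (a : ℕ) :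
    Set.InjOn (fun j : ℕ => ((a + j : ℕ) : ZMod L)) (range N) := by
  intro i hi j hj h
  simp only [coe_range, Set.mem_Iio] at hi hj
  exact ((ZMod.natCast_eq_natCast_iff _ _ _).1 h).add_left_cancel' a |>.eq_of_lt_of_lt
    (by omega) (by omega)

theorem tentPotential_image_natCast_add {L N : ℕ} (hN : N ≤ L) (c : ZMod L) (a : ℕ) :
    tentPotential c ((range N).image fun j => ((a + j : ℕ) : ZMod L)) =
      ∑ j ∈ range N, |(((a + j : ℕ) : ZMod L) - c).valMinAbs| :=
  sum_image (injOn_natCast_add_range hN a)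

theorem sum_range_two_mul_abs_add_one_sub (k : ℕ) :
    ∑ j ∈ range (2 * k), |(j : ℤ) + 1 - k| = (k : ℤ) ^ 2 := by
  induction k with
  | zero => simp
  | succ k ih =>
    rw [show 2 * (k + 1) = 2 * k + 1 + 1 by ring, sum_range_succ', sum_range_succ]
    push_cast
    simp only [add_sub_add_right_eq_sub]
    rw [ih, abs_of_pos (by linarith), abs_of_nonpos (by linarith)]
    ring

section Blocks

variable {k m : ℕ}

theorem tentPotential_block (hkm : k < m) :
    tentPotential ((k + m : ℕ) : ZMod (2 * m))
        ((range (2 * k)).image fun j => ((j + 1 : ℕ) : ZMod (2 * m))) =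
      2 * k * m - k ^ 2 := by
  have : NeZero m := ⟨by omega⟩
  simp only [Nat.add_comm _ 1]
  rw [tentPotential_image_natCast_add (by omega)]
  have hterm : ∀ j ∈ range (2 * k),
      |(((1 + j : ℕ) : ZMod (2 * m)) - ((k + m : ℕ) : ZMod (2 * m))).valMinAbs| =
        m - |(j : ℤ) + 1 - k| := by
    intro j hj
    have hcast : ((1 + j : ℕ) : ZMod (2 * m)) - ((k + m : ℕ) : ZMod (2 * m)) =
        (((j + 1 - k : ℤ) + m : ℤ) : ZMod (2 * m)) := by
      have := ZMod.natCast_self (2 * m)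
      push_cast at this ⊢
      linear_combination -this
    have hj := mem_range.1 hj
    rw [hcast, abs_valMinAbs_intCast_add_half (abs_le.2 ⟨by omega, by omega⟩)]
  rw [sum_congr rfl hterm, sum_sub_distrib, sum_range_two_mul_abs_add_one_sub]
  simp only [sum_const, card_range, nsmul_eq_mul]
  push_cast
  ring

theorem tentPotential_shiftedBlock (hkm : k < m) :
    tentPotential ((k + m : ℕ) : ZMod (2 * m))
        ((range (2 * k)).image fun j => ((2 * m / 2 + 1 + j : ℕ) : ZMod (2 * m))) =
      k ^ 2 := by
  have : NeZero m := ⟨by omega⟩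
  rw [tentPotential_image_natCast_add (by omega)]
  have hterm : ∀ j ∈ range (2 * k),
      |(((2 * m / 2 + 1 + j : ℕ) : ZMod (2 * m)) - ((k + m : ℕ) : ZMod (2 * m))).valMinAbs| =
        |(j : ℤ) + 1 - k| := by
    intro j hj
    have hcast : ((2 * m / 2 + 1 + j : ℕ) : ZMod (2 * m)) - ((k + m : ℕ) : ZMod (2 * m)) =
        ((j + 1 - k : ℤ) : ZMod (2 * m)) := by
      rw [Nat.mul_div_cancel_left m two_pos]
      push_cast
      ring
    have hj := mem_range.1 hj
    have hy : |(j : ℤ) + 1 - k| ≤ k := abs_le.2 ⟨by omega, by omega⟩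
    have hkm' : (k : ℤ) < m := by exact_mod_cast hkm
    rw [hcast, abs_valMinAbs_intCast (by push_cast; linarith)]
  rw [sum_congr rfl hterm, sum_range_two_mul_abs_add_one_sub]

end Blocks

/-- lower bound for moving the left-packed block `{1,…,N}` to the
shifted block `{L/2+1,…,L/2+N}` in the periodic SSEP (for `N`, `L` even). -/
theorem periodic_block_shift_lower_bound (N L : ℕ) (hN2 : 2 ∣ N) (hL2 : 2 ∣ L)
    (hN : 0 < N) (hNL : N < L) :
    ∀ n : ℕ, Reaches (StepPer L N)
        ((Finset.range N).image fun j => ((j + 1 : ℕ) : ZMod L))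
        ((Finset.range N).image fun j => ((L / 2 + 1 + j : ℕ) : ZMod L)) n →
      (∃ k : ℕ, 1 ≤ k ∧ k ≤ N ∧
          ((N : ℤ) * (L : ℤ)) / 2 - 2 * (k : ℤ) * ((N : ℤ) - (k : ℤ)) ≤ (n : ℤ)) ∧
      ((N : ℤ) * ((L : ℤ) - (N : ℤ))) / 2 ≤ (n : ℤ) := by
  intro n hr
  obtain ⟨k, rfl⟩ := hN2
  obtain ⟨m, rfl⟩ := hL2
  have hkm : k < m := by omega
  have hmoves : 2 * (k : ℤ) * m - 2 * k ^ 2 ≤ n := by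
    have h := hr.abs_sub_le (tentPotential ((k + m : ℕ) : ZMod (2 * m)))
      fun _ _ => abs_tentPotential_sub_le_one _
    rw [tentPotential_block hkm, tentPotential_shiftedBlock hkm] at h
    linarith [neg_abs_le ((k : ℤ) ^ 2 - (2 * k * m - k ^ 2))]
  have hhalf (x : ℤ) : 2 * x / 2 = x := by omega
  refine ⟨⟨k, by omega, by omega, ?_⟩, ?_⟩
  · rw [show ((2 * k : ℕ) : ℤ) * ((2 * m : ℕ) : ℤ) = 2 * (2 * k * m) by push_cast; ring, hhalf]
    push_cast
    linarith
  · rw [show ((2 * k : ℕ) : ℤ) * (((2 * m : ℕ) : ℤ) - ((2 * k : ℕ) : ℤ)) =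
      2 * (2 * k * m - 2 * k ^ 2) by push_cast; ring, hhalf]
    exact hmoves

end Paper
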